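/- Let m, n ≥ 1, let H be a finite group of linear isometries of ℂ^m, and let v₀ ∈ ℂ^m be a unit vector with h v₀ ≠ v₀ for every h ∈ H with h ≠ 1. Let V = (ℂ^m)^n with inner product ⟨x, y⟩ = Σᵢ ⟨xᵢ, yᵢ⟩, and let G be the wreath product group of all linear isometries g of V of the form g(x₁, …, xₙ) = (h_{σ(1)} x_{σ(1)}, …, h_{σ(n)} x_{σ(n)}) for some permutation σ of {1, …, n} and h₁, …, hₙ ∈ H. Let x₀ = (u₁v₀, …, uₙv₀) where 0 < u₁ < ⋯ < uₙ are real numbers with Σ uᵢ² = 1. Take the subgroup sequence G_{2ℓ−1} = {g ∈ G : σ permutes {1,…,ℓ} and fixes all other indices, and hᵢ = 1 for i > ℓ} (1 ≤ ℓ ≤ n) and G_{2ℓ} = {g ∈ G : σ permutes {1,…,ℓ} and fixes all other indices, and hᵢ = 1 for i > ℓ+1} (1 ≤ ℓ ≤ n−1), with coset leaders CL(G_{2ℓ}/G_{2ℓ−1}) = {the isometry multiplying coordinate ℓ+1 by h and fixing all other coordinates : h ∈ H} and CL(G_{2ℓ+1}/G_{2ℓ}) = {the insertion isometries c_j sending (x₁,…,xₙ)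 to (x₁,…,x_{j−1}, x_{ℓ+1}, x_j,…,x_ℓ, x_{ℓ+2},…,xₙ) : 1 ≤ j ≤ ℓ+1}. Then the subgroup decoding algorithm decodes robustly: for every g ∈ G, every received vector r ∈ DR(g), and every greedy run d₁, …, d_{2n−1} on r, the output d_{2n−1}⋯d₁ equals g. -/

import Mathlib

open Set
open scoped Pointwise

noncomputable section

namespace GroupCode

variable {V : Type*} [NormedAddCommGroup V] [InnerProductSpace ℂ V]

/-- The group of linear isometries of a complex inner product space. -/
abbrev Iso (V : Type*) [NormedAddCommGroup V] [InnerProductSpace ℂ V] := V ≃ₗᵢ[ℂ] V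

/-- The stabilizer (isotropy) of `x₀` inside a subgroup `H`. -/
def Stab (x₀ : V) (H : Subgroup (Iso V)) : Set (Iso V) := {h | h ∈ H ∧ h x₀ = x₀}

/-- The fundamental region of a subgroup `H`. -/
def FR (x₀ : V) (H : Subgroup (Iso V)) : Set V :=
  {x | ∀ h ∈ H, h ∉ Stab x₀ H → ‖x - x₀‖ < ‖h x - x₀‖}

/-- The decoding region of a group element `g ∈ G`. -/
def DR (x₀ : V) (G : Subgroup (Iso V)) (g : Iso V) : Set V :=
  {x | ∀ a ∈ G, a ∉ Stab x₀ G * ({g} : Set (Iso V)) → ‖g x - x₀‖ < ‖a x - x₀‖}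

/-- `CL` is a set of coset leaders for `K` over `H`: a subset of `K` containing `1` and
exactly one element of each left coset of `H` in `K`. -/
def IsCosetLeaders (H K : Subgroup (Iso V)) (CL : Set (Iso V)) : Prop :=
  CL ⊆ (K : Set (Iso V)) ∧ (1 : Iso V) ∈ CL ∧ ∀ a ∈ K, ∃! c, c ∈ CL ∧ c⁻¹ * a ∈ H

/-- Greed compatibility of a set of coset leaders for `K` over `H`. -/
def GreedCompatible (x₀ : V) (H K : Subgroup (Iso V)) (CL : Set (Iso V)) : Prop :=
  ∀ x ∈ FR x₀ H, ∃ c ∈ CL, c x ∈ FR x₀ K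

/-- A coset leader `c` of `K` over `H` is minimal if `x₀ ∈ c(FR(H))`. -/
def Minimal (x₀ : V) (H : Subgroup (Iso V)) (c : Iso V) : Prop :=
  x₀ ∈ ⇑c '' FR x₀ H

/-- A coset leader `c` of `K` over `H` is region minimal if `FR(K) ⊆ c(FR(H))`. -/
def RegionMinimal (x₀ : V) (H K : Subgroup (Iso V)) (c : Iso V) : Prop :=
  FR x₀ K ⊆ ⇑c '' FR x₀ H

/-- The product `d_k ⋯ d_1`. -/
def pprod {α : Type*} [Monoid α] (d : ℕ → α) (k : ℕ) : α :=
  (List.range k).foldl (fun acc j => d (j + 1) * acc) 1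

/-- The product `cs_ℓ ⋯ cs_{k+1}` of induced coset leaders. -/
def pprodRange {α : Type*} [Monoid α] (cs : ℕ → α) (k ℓ : ℕ) : α :=
  (List.range (ℓ - k)).foldl (fun acc j => cs (k + 1 + j) * acc) 1

/-- A greedy run of the subgroup decoding algorithm on a received vector `r`:
at each step `k`, `d k ∈ CL k` minimizes the distance of `d (d_{k-1} ⋯ d_1 r)` to `x₀`
over all `d ∈ CL k`. -/
def IsGreedyRun (x₀ : V) (CL : ℕ → Set (Iso V)) (m : ℕ) (r : V) (d : ℕ → Iso V) : Prop :=
  ∀ k < m, d (k + 1) ∈ CL (k + 1) ∧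
    ∀ e ∈ CL (k + 1), ‖(d (k + 1)) ((pprod d k) r) - x₀‖ ≤ ‖e ((pprod d k) r) - x₀‖

end GroupCode

namespace GroupCode

/-- The index map realizing the insertion `(x₁,…,xₙ) ↦
(x₁,…,x_{j−1}, x_{ℓ+1}, x_j, …, x_ℓ, x_{ℓ+2}, …, xₙ)` (0-indexed: the output at
position `i` is `x (insIdx n ℓ j hℓ i)`). -/
def insIdx (n ℓ j : ℕ) (hℓ : ℓ < n) (i : Fin n) : Fin n :=
  if (i : ℕ) < j then i
  else if (i : ℕ) = j then ⟨ℓ, hℓ⟩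
  else if (i : ℕ) ≤ ℓ then ⟨(i : ℕ) - 1, Nat.lt_of_le_of_lt (Nat.sub_le _ _) i.isLt⟩
  else i

end GroupCode

/-!
Put `y = g r`. Since `v₀` has trivial stabiliser in `H` and the weights `u i` are distinct and
positive, `x₀` has trivial stabiliser in `G`, so `y` lies in the fundamental region of `G`. All
elements of `G` are isometries, so `‖z - x₀‖` orders the images of a vector like
`-re ⟪z, x₀⟫ = -∑ u i * re ⟪z i, v₀⟫`. Comparing `y` with its images under one coordinate
multiplication and under one transposition shows that each `y i` strictly maximises
`re ⟪·, v₀⟫` on its `H`-orbit and that these maxima increase with `i`. Hence every alignment step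
of a greedy run turns the next coordinate of `r` into the matching coordinate of `y`, and every
insertion step puts it at its sorted place among the coordinates already processed: the run is an
insertion sort. After `2n - 1` steps it has turned `r` into `y`, and `g` is the only element of
`G` sending `r` to `y`.
-/

namespace GroupCode

open scoped InnerProductSpace

section DecodingRegion

variable {V : Type*} [NormedAddCommGroup V] [InnerProductSpace ℂ V] {x₀ : V}
  {G : Subgroup (Iso V)} {g : Iso V} {r : V}

theorem apply_mem_FR_of_mem_DR (hg : g ∈ G) (hr : r ∈ DR x₀ G g) : g r ∈ FR x₀ G := by
  intro b hb hbs
  refine hr (b * g) (mul_mem hb hg) ?_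
  rintro ⟨s, hs, g', rfl, hsg⟩
  exact hbs (mul_right_cancel hsg ▸ hs)

theorem eq_of_apply_eq_of_mem_DR (hstab : ∀ s ∈ G, s x₀ = x₀ → s = 1)
    (hr : r ∈ DR x₀ G g) {a : Iso V} (ha : a ∈ G) (h : a r = g r) : a = g := by
  by_contra hne
  have hlt := hr a ha (by
    rintro ⟨s, hs, g', rfl, rfl⟩
    exact hne (by rw [hstab s hs.1 hs.2]; exact one_mul g'))
  exact lt_irrefl _ (h ▸ hlt)

theorem norm_sub_le_norm_sub_iff {x x' z : V} (h : ‖x‖ = ‖x'‖) :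
    ‖x - z‖ ≤ ‖x' - z‖ ↔ (⟪x', z⟫_ℂ).re ≤ (⟪x, z⟫_ℂ).re := by
  rw [← pow_le_pow_iff_left₀ (norm_nonneg _) (norm_nonneg _) two_ne_zero, norm_sub_sq (𝕜 := ℂ),
    norm_sub_sq (𝕜 := ℂ), h]
  simp only [RCLike.re_to_complex]
  constructor <;> intro <;> linarith

theorem norm_sub_lt_norm_sub_iff {x x' z : V} (h : ‖x‖ = ‖x'‖) :
    ‖x - z‖ < ‖x' - z‖ ↔ (⟪x', z⟫_ℂ).re < (⟪x, z⟫_ℂ).re := by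
  rw [← pow_lt_pow_iff_left₀ (norm_nonneg _) (norm_nonneg _) two_ne_zero, norm_sub_sq (𝕜 := ℂ),
    norm_sub_sq (𝕜 := ℂ), h]
  simp only [RCLike.re_to_complex]
  constructor <;> intro <;> linarith

end DecodingRegion

section GreedyRun

theorem pprod_succ {α : Type*} [Monoid α] (d : ℕ → α) (k : ℕ) :
    pprod d (k + 1) = d (k + 1) * pprod d k := by
  simp [pprod, List.range_succ, List.foldl_append]

theorem pprod_mem {α : Type*} [Group α] {G : Subgroup α} {d : ℕ → α} {m : ℕ}
    (h : ∀ k < m, d (k + 1) ∈ G) : pprod d m ∈ G := by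
  induction m with
  | zero => exact G.one_mem
  | succ k ih =>
    rw [pprod_succ]
    exact mul_mem (h k k.lt_succ_self) (ih fun j hj => h j (hj.trans k.lt_succ_self))

variable {V : Type*} [NormedAddCommGroup V] [InnerProductSpace ℂ V]

theorem pprod_succ_apply (d : ℕ → Iso V) (k : ℕ) (r : V) :
    pprod d (k + 1) r = d (k + 1) (pprod d k r) := by
  rw [pprod_succ]
  rfl

/-- `IsGreedyRun x₀ CL m r d` unfolds to: `d (k + 1)` is a greedy choice from `CL (k + 1)` at
`pprod d k r` for every `k < m`. -/
def IsGreedyChoice (x₀ : V) (S : Set (Iso V)) (X : V) (c : Iso V) : Prop :=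
  c ∈ S ∧ ∀ e ∈ S, ‖c X - x₀‖ ≤ ‖e X - x₀‖

end GreedyRun

theorem sum_mul_comp_swap_sub_sum_mul {ι : Type*} [Fintype ι] [DecidableEq ι] (f s : ι → ℝ)
    {a b : ι} (hab : a ≠ b) :
    ∑ i, f i * s (Equiv.swap a b i) - ∑ i, f i * s i = (f b - f a) * (s a - s b) := by
  rw [← Finset.sum_sub_distrib, Fintype.sum_eq_add a b hab fun i hi => by
    rw [Equiv.swap_apply_of_ne_of_ne hi.1 hi.2, sub_self]]
  simp only [Equiv.swap_apply_left, Equiv.swap_apply_right]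
  ring

section Wreath

variable {W : Type*} [NormedAddCommGroup W] [InnerProductSpace ℂ W] {n : ℕ}
  {H : Subgroup (W ≃ₗᵢ[ℂ] W)}

def wreath (σ : Equiv.Perm (Fin n)) (h : Fin n → W ≃ₗᵢ[ℂ] W) :
    Iso (PiLp 2 fun _ : Fin n => W) :=
  (LinearIsometryEquiv.piLpCongrRight 2 h).trans
    (LinearIsometryEquiv.piLpCongrLeft 2 ℂ W σ.symm)

theorem wreath_apply (σ : Equiv.Perm (Fin n)) (h : Fin n → W ≃ₗᵢ[ℂ] W)
    (x : PiLp 2 fun _ : Fin n => W) (i : Fin n) : wreath σ h x i = h (σ i) (x (σ i)) :=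
  rfl

def wreathProduct (H : Subgroup (W ≃ₗᵢ[ℂ] W)) (n : ℕ) : Set (Iso (PiLp 2 fun _ : Fin n => W)) :=
  {a | ∃ (σ : Equiv.Perm (Fin n)) (h : Fin n → W ≃ₗᵢ[ℂ] W),
    (∀ i, h i ∈ H) ∧ ∀ x i, a x i = h (σ i) (x (σ i))}

theorem wreath_mem_wreathProduct (σ : Equiv.Perm (Fin n)) {h : Fin n → W ≃ₗᵢ[ℂ] W}
    (hh : ∀ i, h i ∈ H) : wreath σ h ∈ wreathProduct H n :=
  ⟨σ, h, hh, fun _ _ => rfl⟩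

def coordMul (k : ℕ) (h : W ≃ₗᵢ[ℂ] W) : Iso (PiLp 2 fun _ : Fin n => W) :=
  wreath 1 fun i => if (i : ℕ) = k then h else 1

theorem coordMul_apply (k : ℕ) (h : W ≃ₗᵢ[ℂ] W) (x : PiLp 2 fun _ : Fin n => W) (i : Fin n) :
    coordMul k h x i = if (i : ℕ) = k then h (x i) else x i := by
  rw [coordMul, wreath_apply, Equiv.Perm.one_apply]
  split_ifs <;> rfl

theorem coordMul_mem {k : ℕ} {h : W ≃ₗᵢ[ℂ] W} (hh : h ∈ H) :
    (coordMul k h : Iso (PiLp 2 fun _ : Fin n => W)) ∈ wreathProduct H n :=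
  wreath_mem_wreathProduct _ fun i => by
    split_ifs
    exacts [hh, H.one_mem]

/-- The leader set `CL(G_{2ℓ}/G_{2ℓ-1})` (and `CL(G₁/G₀)` for `ℓ = 0`); coordinates are
numbered from `0`, so this acts on the paper's coordinate `ℓ + 1`. -/
def coordMulLeaders (H : Subgroup (W ≃ₗᵢ[ℂ] W)) (n ℓ : ℕ) :
    Set (Iso (PiLp 2 fun _ : Fin n => W)) :=
  {c | ∃ h ∈ H, ∀ x i, c x i = if (i : ℕ) = ℓ then h (x i) else x i}

theorem coordMulLeaders_subset (ℓ : ℕ) : coordMulLeaders H n ℓ ⊆ wreathProduct H n := by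
  rintro c ⟨h, hh, hc⟩
  have hc' : c = coordMul ℓ h :=
    LinearIsometryEquiv.ext fun x => PiLp.ext fun i => by rw [hc, coordMul_apply]
  exact hc' ▸ coordMul_mem hh

end Wreath

section InitialVector

variable {W : Type*} [NormedAddCommGroup W] [InnerProductSpace ℂ W] {n : ℕ}
  {H : Subgroup (W ≃ₗᵢ[ℂ] W)} {v₀ : W} {u : Fin n → ℝ} {x₀ : PiLp 2 fun _ : Fin n => W}

theorem re_inner_eq_sum (hx₀ : ∀ i, x₀ i = (u i : ℂ) • v₀) (x : PiLp 2 fun _ : Fin n => W) :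
    (⟪x, x₀⟫_ℂ).re = ∑ i, u i * (⟪x i, v₀⟫_ℂ).re := by
  simp only [PiLp.inner_apply, hx₀, inner_smul_right, Complex.re_sum, Complex.re_ofReal_mul]

theorem re_inner_eq_add_of_forall_ne (hx₀ : ∀ i, x₀ i = (u i : ℂ) • v₀)
    {x x' : PiLp 2 fun _ : Fin n => W} {k : Fin n} (h : ∀ i ≠ k, x' i = x i) :
    (⟪x', x₀⟫_ℂ).re = (⟪x, x₀⟫_ℂ).re + u k * ((⟪x' k, v₀⟫_ℂ).re - (⟪x k, v₀⟫_ℂ).re) := by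
  rw [re_inner_eq_sum hx₀, re_inner_eq_sum hx₀, ← sub_eq_iff_eq_add', ← Finset.sum_sub_distrib,
    Fintype.sum_eq_single k fun i hi => by rw [h i hi, sub_self]]
  ring

theorem eq_one_of_mem_wreathProduct_of_apply_eq (hv₀sep : ∀ h ∈ H, h v₀ = v₀ → h = 1)
    (hv₀ : v₀ ≠ 0) (hu : ∀ i, 0 < u i) (hinj : Function.Injective u)
    (hx₀ : ∀ i, x₀ i = (u i : ℂ) • v₀) {s : Iso (PiLp 2 fun _ : Fin n => W)}
    (hs : s ∈ wreathProduct H n) (hfix : s x₀ = x₀) : s = 1 := by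
  obtain ⟨σ, h, hh, hs⟩ := hs
  have hcoord : ∀ i, h (σ i) ((u (σ i) : ℂ) • v₀) = (u i : ℂ) • v₀ := fun i => by
    rw [← hx₀, ← hx₀, ← hs, hfix]
  have hσ : ∀ i, σ i = i := fun i => hinj (by
    have hnorm := congrArg norm (hcoord i)
    rwa [LinearIsometryEquiv.norm_map, norm_smul, norm_smul, Complex.norm_real,
      Complex.norm_real, Real.norm_of_nonneg (hu _).le, Real.norm_of_nonneg (hu _).le,
      mul_left_inj' (norm_ne_zero_iff.mpr hv₀)] at hnorm)
  have hh1 : ∀ i, h i = 1 := fun i => hv₀sep _ (hh i) (by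
    have hi := hcoord i
    rw [hσ, map_smul] at hi
    exact smul_right_injective _ (Complex.ofReal_ne_zero.mpr (hu i).ne') hi)
  refine LinearIsometryEquiv.ext fun x => PiLp.ext fun i => ?_
  rw [hs, hσ, hh1]
  rfl

variable {G : Subgroup (Iso (PiLp 2 fun _ : Fin n => W))} {y : PiLp 2 fun _ : Fin n => W}

theorem re_inner_apply_lt_of_mem_FR (hHG : wreathProduct H n ⊆ G)
    (hv₀sep : ∀ h ∈ H, h v₀ = v₀ → h = 1) (hu : ∀ i, 0 < u i)
    (hx₀ : ∀ i, x₀ i = (u i : ℂ) • v₀) (hy : y ∈ FR x₀ G) (i : Fin n) {h : W ≃ₗᵢ[ℂ] W}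
    (hh : h ∈ H) (h1 : h ≠ 1) : (⟪h (y i), v₀⟫_ℂ).re < (⟪y i, v₀⟫_ℂ).re := by
  have hmoves : coordMul i h x₀ ≠ x₀ := fun hfix => h1 (hv₀sep h hh (by
    have hi := congrArg (· i) hfix
    simp only [coordMul_apply, hx₀, map_smul] at hi
    exact smul_right_injective _ (Complex.ofReal_ne_zero.mpr (hu i).ne') hi))
  have hlt := hy (coordMul i h) (hHG (coordMul_mem hh)) fun hs => hmoves hs.2
  rw [norm_sub_lt_norm_sub_iff (LinearIsometryEquiv.norm_map _ _).symm,
    re_inner_eq_add_of_forall_ne hx₀ (k := i) (x := y) fun j hj => by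
      rw [coordMul_apply, if_neg (Fin.val_ne_of_ne hj)],
    coordMul_apply, if_pos rfl] at hlt
  exact sub_neg.mp (neg_of_mul_neg_right (by linarith) (hu i).le)

theorem strictMono_re_inner_of_mem_FR (hHG : wreathProduct H n ⊆ G) (hv₀ : v₀ ≠ 0)
    (hu : StrictMono u) (hx₀ : ∀ i, x₀ i = (u i : ℂ) • v₀) (hy : y ∈ FR x₀ G) :
    StrictMono fun i => (⟪y i, v₀⟫_ℂ).re := by
  intro i j hij
  set b : Iso (PiLp 2 fun _ : Fin n => W) := wreath (Equiv.swap i j) 1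
  have hb : ∀ x p, b x p = x (Equiv.swap i j p) := fun _ _ => rfl
  have hmoves : b x₀ ≠ x₀ := fun hfix => by
    have hi := congrArg (· i) hfix
    simp only [hb, Equiv.swap_apply_left, hx₀] at hi
    exact hij.ne' (hu.injective (by exact_mod_cast smul_left_injective ℂ hv₀ hi))
  have hlt := hy b (hHG (wreath_mem_wreathProduct _ fun _ => H.one_mem)) fun hs => hmoves hs.2
  rw [norm_sub_lt_norm_sub_iff (LinearIsometryEquiv.norm_map _ _).symm, re_inner_eq_sum hx₀,
    re_inner_eq_sum hx₀, ← sub_neg] at hlt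
  simp only [hb] at hlt
  rw [sum_mul_comp_swap_sub_sum_mul u (fun p => (⟪y p, v₀⟫_ℂ).re) hij.ne] at hlt
  exact sub_neg.mp (neg_of_mul_neg_right hlt (sub_pos.mpr (hu hij)).le)

end InitialVector

section Insertion

variable {n ℓ j : ℕ} (hℓ : ℓ < n)

theorem insIdx_val (i : Fin n) :
    (insIdx n ℓ j hℓ i : ℕ) =
      if (i : ℕ) < j then (i : ℕ) else if (i : ℕ) = j then ℓ
      else if (i : ℕ) ≤ ℓ then (i : ℕ) - 1 else (i : ℕ) := by
  unfold insIdx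
  split_ifs <;> rfl

theorem insIdx_injective (hj : j ≤ ℓ) : Function.Injective (insIdx n ℓ j hℓ) := by
  intro a b hab
  have h := congrArg Fin.val hab
  rw [insIdx_val, insIdx_val] at h
  apply Fin.ext
  split_ifs at h <;> omega

theorem insIdx_bijective (hj : j ≤ ℓ) : Function.Bijective (insIdx n ℓ j hℓ) :=
  Finite.injective_iff_bijective.mp (insIdx_injective hℓ hj)

theorem insIdx_eq_self_of_lt (hj : j ≤ ℓ) {i : Fin n} (hi : ℓ < i) : insIdx n ℓ j hℓ i = i :=
  Fin.ext (by rw [insIdx_val]; split_ifs <;> omega)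

theorem insIdx_lt_succ {i : Fin n} (hi : (i : ℕ) < ℓ + 1) : (insIdx n ℓ j hℓ i : ℕ) < ℓ + 1 := by
  rw [insIdx_val]
  split_ifs <;> omega

theorem insIdx_succ {a : ℕ} (ha : a < ℓ) :
    insIdx n ℓ (a + 1) hℓ = insIdx n ℓ a hℓ ∘ Equiv.swap ⟨a, by omega⟩ ⟨a + 1, by omega⟩ := by
  funext i
  apply Fin.ext
  rw [Function.comp_apply, insIdx_val, insIdx_val, Equiv.swap_apply_def]
  split_ifs <;> simp_all [Fin.ext_iff] <;> omega

theorem sum_mul_insIdx_succ_sub (u s : Fin n → ℝ) {a : ℕ} (ha : a < ℓ) :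
    ∑ i, u i * s (insIdx n ℓ (a + 1) hℓ i) - ∑ i, u i * s (insIdx n ℓ a hℓ i) =
      (u ⟨a + 1, by omega⟩ - u ⟨a, by omega⟩) * (s ⟨ℓ, hℓ⟩ - s ⟨a, by omega⟩) := by
  have hA : insIdx n ℓ a hℓ ⟨a, by omega⟩ = ⟨ℓ, hℓ⟩ := Fin.ext (by simp [insIdx_val])
  have hA' : insIdx n ℓ a hℓ ⟨a + 1, by omega⟩ = ⟨a, by omega⟩ :=
    Fin.ext (by rw [insIdx_val]; split_ifs <;> simp_all)
  rw [insIdx_succ hℓ ha]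
  simpa only [Function.comp_apply, hA, hA'] using
    sum_mul_comp_swap_sub_sum_mul u (s ∘ insIdx n ℓ a hℓ) (a := ⟨a, by omega⟩)
      (b := ⟨a + 1, by omega⟩) (by simp)

theorem strictMonoOn_comp_insIdx {s : Fin n → ℝ} (hs : StrictMonoOn s {p | (p : ℕ) < ℓ})
    (hlow : ∀ p : Fin n, (p : ℕ) < j → s p < s ⟨ℓ, hℓ⟩)
    (hup : ∀ p : Fin n, j ≤ (p : ℕ) → (p : ℕ) < ℓ → s ⟨ℓ, hℓ⟩ < s p) :
    StrictMonoOn (s ∘ insIdx n ℓ j hℓ) {p | (p : ℕ) < ℓ + 1} := by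
  have key : ∀ P Q : Fin n, ((P : ℕ) < ℓ ∧ (Q : ℕ) < ℓ ∧ (P : ℕ) < Q) ∨
      ((Q : ℕ) = ℓ ∧ (P : ℕ) < j) ∨ ((P : ℕ) = ℓ ∧ j ≤ (Q : ℕ) ∧ (Q : ℕ) < ℓ) → s P < s Q := by
    rintro P Q (⟨hP, hQ, hPQ⟩ | ⟨hQ, hP⟩ | ⟨hP, hjQ, hQ⟩)
    · exact hs hP hQ hPQ
    · exact (show Q = ⟨ℓ, hℓ⟩ from Fin.ext hQ) ▸ hlow P hP
    · exact (show P = ⟨ℓ, hℓ⟩ from Fin.ext hP) ▸ hup Q hjQ hQ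
  intro p (hp : (p : ℕ) < ℓ + 1) q (hq : (q : ℕ) < ℓ + 1) (hpq : (p : ℕ) < q)
  apply key
  have hP := insIdx_val hℓ (j := j) p
  have hQ := insIdx_val hℓ (j := j) q
  split_ifs at hP hQ <;> omega

/-- Moving the insertion point from `a` to `a + 1` changes the sum by
`(u (a + 1) - u a) * (s ℓ - s a)`, so at a maximiser `j` the entries at positions `j - 1` and `j`
bracket `s ℓ`. -/
theorem strictMonoOn_comp_insIdx_of_isMax {u s : Fin n → ℝ} (hu : StrictMono u)
    (hs : StrictMonoOn s {p | (p : ℕ) < ℓ}) (hne : ∀ p : Fin n, (p : ℕ) < ℓ → s p ≠ s ⟨ℓ, hℓ⟩)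
    (hj : j ≤ ℓ)
    (hmax : ∀ j' ≤ ℓ, ∑ i, u i * s (insIdx n ℓ j' hℓ i) ≤ ∑ i, u i * s (insIdx n ℓ j hℓ i)) :
    StrictMonoOn (s ∘ insIdx n ℓ j hℓ) {p | (p : ℕ) < ℓ + 1} := by
  refine strictMonoOn_comp_insIdx hℓ hs (fun p hp => ?_) (fun p hp hpℓ => ?_)
  · obtain ⟨a, rfl⟩ : ∃ a, j = a + 1 := ⟨j - 1, by omega⟩
    have hdiff := sum_mul_insIdx_succ_sub hℓ u s (a := a) (by omega)
    have hua := hu (show (⟨a, by omega⟩ : Fin n) < ⟨a + 1, by omega⟩ from Nat.lt_succ_self a)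
    have hsa : s ⟨a, by omega⟩ < s ⟨ℓ, hℓ⟩ :=
      lt_of_le_of_ne (by nlinarith [hmax a (by omega)]) (hne _ (show a < ℓ by omega))
    exact lt_of_le_of_lt (hs.monotoneOn (show (p : ℕ) < ℓ by omega) (show a < ℓ by omega)
      (show (p : ℕ) ≤ a by omega)) hsa
  · have hdiff := sum_mul_insIdx_succ_sub hℓ u s (a := j) (by omega)
    have hua := hu (show (⟨j, by omega⟩ : Fin n) < ⟨j + 1, by omega⟩ from Nat.lt_succ_self j)
    have hsj : s ⟨ℓ, hℓ⟩ < s ⟨j, by omega⟩ :=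
      lt_of_le_of_ne (by nlinarith [hmax (j + 1) (by omega)]) (hne _ (show j < ℓ by omega)).symm
    exact lt_of_lt_of_le hsj (hs.monotoneOn (show j < ℓ by omega) hpℓ (show j ≤ (p : ℕ) from hp))

variable {W : Type*} [NormedAddCommGroup W] [InnerProductSpace ℂ W]

def insertion (hj : j ≤ ℓ) : Iso (PiLp 2 fun _ : Fin n => W) :=
  wreath (Equiv.ofBijective _ (insIdx_bijective hℓ hj)) 1

/-- The leader set `CL(G_{2ℓ+1}/G_{2ℓ})`. -/
def insertionLeaders (W : Type*) [NormedAddCommGroup W] [InnerProductSpace ℂ W] :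
    Set (Iso (PiLp 2 fun _ : Fin n => W)) :=
  {c | ∃ j ≤ ℓ, ∀ x i, c x i = x (insIdx n ℓ j hℓ i)}

theorem insertionLeaders_subset (H : Subgroup (W ≃ₗᵢ[ℂ] W)) :
    insertionLeaders hℓ W ⊆ wreathProduct H n := by
  rintro c ⟨j, hj, hc⟩
  have hc' : c = insertion hℓ hj := LinearIsometryEquiv.ext fun x => PiLp.ext fun i => hc x i
  exact hc' ▸ wreath_mem_wreathProduct _ fun _ => H.one_mem

end Insertion

theorem apply_eq_of_le_of_orbit_max {W : Type*} [NormedAddCommGroup W] [InnerProductSpace ℂ W]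
    {H : Subgroup (W ≃ₗᵢ[ℂ] W)} {f : W → ℝ} {y z : W} {k h₁ : W ≃ₗᵢ[ℂ] W}
    (hmax : ∀ h ∈ H, h ≠ 1 → f (h y) < f y) (hk : k ∈ H) (hky : k z = y) (hh₁ : h₁ ∈ H)
    (hle : f y ≤ f (h₁ z)) : h₁ z = y := by
  by_contra hne
  have h1 : h₁ * k⁻¹ ≠ 1 := fun h => hne (by rw [← hky, mul_inv_eq_one.mp h])
  have hmul : (h₁ * k⁻¹) y = h₁ z := by
    rw [← hky]
    exact congrArg h₁ (k.symm_apply_apply z)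
  have hlt := hmax _ (mul_mem hh₁ (inv_mem hk)) h1
  rw [hmul] at hlt
  linarith

section PartialDecoding

variable {W : Type*} {n ℓ : ℕ}

/-- The state of a greedy run once `b` coordinates have been aligned and the first `a` of them
sorted: coordinate `p < b` holds `y (w p)`, every other coordinate still holds `r p`, which is
to become `y (τ p)`. -/
def IsPartialDecoding (y r : PiLp 2 fun _ : Fin n => W) (τ : Fin n → Fin n) (a b : ℕ)
    (X : PiLp 2 fun _ : Fin n => W) : Prop :=
  ∃ w : Fin n → Fin n, Function.Injective w ∧ (∀ p : Fin n, b ≤ (p : ℕ) → w p = τ p) ∧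
    StrictMonoOn w {p | (p : ℕ) < a} ∧ (∀ p : Fin n, (p : ℕ) < b → X p = y (w p)) ∧
    (∀ p : Fin n, b ≤ (p : ℕ) → X p = r p)

variable {y r X X' : PiLp 2 fun _ : Fin n => W} {τ : Fin n → Fin n}

theorem isPartialDecoding_zero (hτ : Function.Injective τ) : IsPartialDecoding y r τ 0 0 r :=
  ⟨τ, hτ, fun _ _ => rfl, fun _ hp => absurd hp (Nat.not_lt_zero _),
    fun _ hp => absurd hp (Nat.not_lt_zero _), fun _ _ => rfl⟩

theorem IsPartialDecoding.one_of_zero (hX : IsPartialDecoding y r τ 0 1 X) :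
    IsPartialDecoding y r τ 1 1 X := by
  obtain ⟨w, hw, hwτ, -, hXy, hXr⟩ := hX
  refine ⟨w, hw, hwτ, Set.Subsingleton.strictMonoOn _ ?_, hXy, hXr⟩
  intro p (hp : (p : ℕ) < 1) q (hq : (q : ℕ) < 1)
  exact Fin.ext (by omega)

theorem IsPartialDecoding.eq (hX : IsPartialDecoding y r τ n n X) : X = y := by
  obtain ⟨w, -, -, hmono, hXy, -⟩ := hX
  have hw : w = id := StrictMono.eq_id fun p q hpq => hmono p.isLt q.isLt hpq
  exact PiLp.ext fun p => by rw [hXy p p.isLt, hw, id]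

theorem IsPartialDecoding.insert {f : W → ℝ} {u : Fin n → ℝ} {j : ℕ}
    (hX : IsPartialDecoding y r τ ℓ (ℓ + 1) X) (hℓ : ℓ < n) (hu : StrictMono u)
    (hfy : StrictMono (f ∘ y)) (hj : j ≤ ℓ)
    (hmax : ∀ j' ≤ ℓ, ∑ i, u i * f (X (insIdx n ℓ j' hℓ i)) ≤
      ∑ i, u i * f (X (insIdx n ℓ j hℓ i)))
    (hX' : ∀ p, X' p = X (insIdx n ℓ j hℓ p)) :
    IsPartialDecoding y r τ (ℓ + 1) (ℓ + 1) X' := by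
  obtain ⟨w, hw, hwτ, hmono, hXy, hXr⟩ := hX
  have hfX : ∀ p : Fin n, (p : ℕ) < ℓ + 1 → f (X p) = f (y (w p)) := fun p hp => by
    rw [hXy p hp]
  have hsorted := strictMonoOn_comp_insIdx_of_isMax hℓ hu (s := f ∘ X)
    (fun p (hp : (p : ℕ) < ℓ) q (hq : (q : ℕ) < ℓ) hpq => by
      show f (X p) < f (X q)
      rw [hfX p (by omega), hfX q (by omega)]
      exact hfy (hmono hp hq hpq))
    (fun p hp => by
      show f (X p) ≠ f (X ⟨ℓ, hℓ⟩)
      rw [hfX p (by omega), hfX _ (Nat.lt_succ_self ℓ)]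
      exact hfy.injective.ne (hw.ne (Fin.ne_of_val_ne (show (p : ℕ) ≠ ℓ by omega))))
    hj hmax
  refine ⟨w ∘ insIdx n ℓ j hℓ, hw.comp (insIdx_injective hℓ hj), fun p hp => ?_,
    fun p hp q hq hpq => ?_, fun p hp => ?_, fun p hp => ?_⟩
  · rw [Function.comp_apply, insIdx_eq_self_of_lt hℓ hj (by omega), hwτ p hp]
  · have hlt := hsorted hp hq hpq
    simp only [Function.comp_apply] at hlt
    rw [hfX _ (insIdx_lt_succ hℓ hp), hfX _ (insIdx_lt_succ hℓ hq)] at hlt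
    exact hfy.lt_iff_lt.mp hlt
  · rw [hX', hXy _ (insIdx_lt_succ hℓ hp), Function.comp_apply]
  · rw [hX', insIdx_eq_self_of_lt hℓ hj (by omega), hXr p hp]

variable [NormedAddCommGroup W] [InnerProductSpace ℂ W]

theorem IsPartialDecoding.align {H : Subgroup (W ≃ₗᵢ[ℂ] W)} {f : W → ℝ}
    (hX : IsPartialDecoding y r τ ℓ ℓ X) (hℓ : ℓ < n)
    (hmax : ∀ h ∈ H, h ≠ 1 → f (h (y (τ ⟨ℓ, hℓ⟩))) < f (y (τ ⟨ℓ, hℓ⟩)))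
    (hry : ∃ k ∈ H, k (r ⟨ℓ, hℓ⟩) = y (τ ⟨ℓ, hℓ⟩)) {h₁ : W ≃ₗᵢ[ℂ] W} (hh₁ : h₁ ∈ H)
    (hgreedy : ∀ h ∈ H, f (h (X ⟨ℓ, hℓ⟩)) ≤ f (h₁ (X ⟨ℓ, hℓ⟩)))
    (hX' : ∀ p : Fin n, X' p = if (p : ℕ) = ℓ then h₁ (X p) else X p) :
    IsPartialDecoding y r τ ℓ (ℓ + 1) X' := by
  obtain ⟨w, hw, hwτ, hmono, hXy, hXr⟩ := hX
  obtain ⟨k, hk, hky⟩ := hry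
  have hXℓ : X ⟨ℓ, hℓ⟩ = r ⟨ℓ, hℓ⟩ := hXr _ le_rfl
  have hℓy : h₁ (X ⟨ℓ, hℓ⟩) = y (w ⟨ℓ, hℓ⟩) := by
    rw [hwτ _ le_rfl, hXℓ]
    rw [hXℓ] at hgreedy
    exact apply_eq_of_le_of_orbit_max hmax hk hky hh₁ (hky ▸ hgreedy k hk)
  refine ⟨w, hw, fun p hp => hwτ p (by omega), hmono, fun p hp => ?_, fun p hp => ?_⟩
  · rw [hX']
    split_ifs with hpℓ
    · obtain rfl : p = ⟨ℓ, hℓ⟩ := Fin.ext hpℓ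
      exact hℓy
    · exact hXy p (by omega)
  · rw [hX', if_neg (by omega), hXr p (by omega)]

variable {H : Subgroup (W ≃ₗᵢ[ℂ] W)} {v₀ : W} {u : Fin n → ℝ} {x₀ : PiLp 2 fun _ : Fin n => W}

theorem IsPartialDecoding.greedy_align (hX : IsPartialDecoding y r τ ℓ ℓ X) (hℓ : ℓ < n)
    (hu : ∀ i, 0 < u i) (hx₀ : ∀ i, x₀ i = (u i : ℂ) • v₀)
    (horbit : ∀ i, ∀ h ∈ H, h ≠ 1 → (⟪h (y i), v₀⟫_ℂ).re < (⟪y i, v₀⟫_ℂ).re)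
    (hry : ∀ p, ∃ k ∈ H, k (r p) = y (τ p)) {c : Iso (PiLp 2 fun _ : Fin n => W)}
    (hc : IsGreedyChoice x₀ (coordMulLeaders H n ℓ) X c) :
    IsPartialDecoding y r τ ℓ (ℓ + 1) (c X) := by
  obtain ⟨⟨h₁, hh₁, hc⟩, hmin⟩ := hc
  refine hX.align hℓ (f := fun z => (⟪z, v₀⟫_ℂ).re) (horbit _) (hry _) hh₁ (fun h hh => ?_) (hc X)
  have hne : ∀ i : Fin n, i ≠ ⟨ℓ, hℓ⟩ → (i : ℕ) ≠ ℓ := fun i hi h => hi (Fin.ext h)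
  have hle := hmin (coordMul ℓ h) ⟨h, hh, coordMul_apply ℓ h⟩
  rw [norm_sub_le_norm_sub_iff (by rw [LinearIsometryEquiv.norm_map, LinearIsometryEquiv.norm_map])]
    at hle
  have hcX := re_inner_eq_add_of_forall_ne hx₀ (x := X) (x' := c X) (k := ⟨ℓ, hℓ⟩)
    fun i hi => by rw [hc, if_neg (hne i hi)]
  have heX := re_inner_eq_add_of_forall_ne hx₀ (x := X) (x' := coordMul ℓ h X) (k := ⟨ℓ, hℓ⟩)
    fun i hi => by rw [coordMul_apply, if_neg (hne i hi)]
  rw [hc, if_pos rfl] at hcX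
  rw [coordMul_apply, if_pos rfl] at heX
  exact le_of_mul_le_mul_left (by linarith) (hu _)

theorem IsPartialDecoding.greedy_insert (hX : IsPartialDecoding y r τ ℓ (ℓ + 1) X) (hℓ : ℓ < n)
    (hu : StrictMono u) (hx₀ : ∀ i, x₀ i = (u i : ℂ) • v₀)
    (hfy : StrictMono fun i => (⟪y i, v₀⟫_ℂ).re) {c : Iso (PiLp 2 fun _ : Fin n => W)}
    (hc : IsGreedyChoice x₀ (insertionLeaders hℓ W) X c) :
    IsPartialDecoding y r τ (ℓ + 1) (ℓ + 1) (c X) := by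
  obtain ⟨⟨j, hj, hc⟩, hmin⟩ := hc
  refine hX.insert hℓ (f := fun z => (⟪z, v₀⟫_ℂ).re) hu hfy hj (fun j' hj' => ?_) (hc X)
  have hle := hmin (insertion hℓ hj') ⟨j', hj', fun _ _ => rfl⟩
  rw [norm_sub_le_norm_sub_iff (by rw [LinearIsometryEquiv.norm_map, LinearIsometryEquiv.norm_map]),
    re_inner_eq_sum hx₀, re_inner_eq_sum hx₀] at hle
  simp only [hc] at hle
  exact hle

end PartialDecoding

section Run

variable {W : Type*} [NormedAddCommGroup W] [InnerProductSpace ℂ W] {n : ℕ}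
  {H : Subgroup (W ≃ₗᵢ[ℂ] W)} {CL : ℕ → Set (Iso (PiLp 2 fun _ : Fin n => W))}

theorem mem_wreathProduct_of_mem_leaders (hCL1 : CL 1 = coordMulLeaders H n 0)
    (hCLeven : ∀ ℓ, 1 ≤ ℓ → ℓ ≤ n - 1 → CL (2 * ℓ) = coordMulLeaders H n ℓ)
    (hCLodd : ∀ ℓ, 1 ≤ ℓ → ∀ hℓ : ℓ < n, CL (2 * ℓ + 1) = insertionLeaders hℓ W)
    {k : ℕ} (hk₁ : 1 ≤ k) (hk : k ≤ 2 * n - 1) {c : Iso (PiLp 2 fun _ : Fin n => W)}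
    (hc : c ∈ CL k) : c ∈ wreathProduct H n := by
  obtain ⟨ℓ, rfl | rfl⟩ := Nat.even_or_odd' k
  · exact coordMulLeaders_subset ℓ (hCLeven ℓ (by omega) (by omega) ▸ hc)
  · rcases Nat.eq_zero_or_pos ℓ with rfl | hℓ
    · exact coordMulLeaders_subset 0 (hCL1 ▸ hc)
    · exact insertionLeaders_subset (by omega) H (hCLodd ℓ hℓ (by omega) ▸ hc)

theorem isPartialDecoding_pprod {v₀ : W} {u : Fin n → ℝ} {x₀ y r : PiLp 2 fun _ : Fin n => W}
    {τ : Fin n → Fin n} {d : ℕ → Iso (PiLp 2 fun _ : Fin n => W)}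
    (hu : ∀ i, 0 < u i) (humono : StrictMono u) (hx₀ : ∀ i, x₀ i = (u i : ℂ) • v₀)
    (horbit : ∀ i, ∀ h ∈ H, h ≠ 1 → (⟪h (y i), v₀⟫_ℂ).re < (⟪y i, v₀⟫_ℂ).re)
    (hfy : StrictMono fun i => (⟪y i, v₀⟫_ℂ).re) (hry : ∀ p, ∃ k ∈ H, k (r p) = y (τ p))
    (hτ : Function.Injective τ) (hCL1 : CL 1 = coordMulLeaders H n 0)
    (hCLeven : ∀ ℓ, 1 ≤ ℓ → ℓ ≤ n - 1 → CL (2 * ℓ) = coordMulLeaders H n ℓ)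
    (hCLodd : ∀ ℓ, 1 ≤ ℓ → ∀ hℓ : ℓ < n, CL (2 * ℓ + 1) = insertionLeaders hℓ W)
    (hd : IsGreedyRun x₀ CL (2 * n - 1) r d) :
    ∀ ℓ, 1 ≤ ℓ → ℓ ≤ n → IsPartialDecoding y r τ ℓ ℓ (pprod d (2 * ℓ - 1) r) := by
  intro ℓ hℓ
  induction ℓ, hℓ using Nat.le_induction with
  | base =>
    intro hn
    have hstep : IsGreedyChoice x₀ (coordMulLeaders H n 0) (pprod d 0 r) (d 1) :=
      hCL1 ▸ hd 0 (by omega)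
    exact ((isPartialDecoding_zero hτ).greedy_align hn hu hx₀ horbit hry hstep).one_of_zero
  | succ ℓ hℓ ih =>
    intro hℓn
    have heven : 2 * ℓ - 1 + 1 = 2 * ℓ := by omega
    have halign :
        IsGreedyChoice x₀ (coordMulLeaders H n ℓ) (pprod d (2 * ℓ - 1) r) (d (2 * ℓ)) := by
      have hstep := hd (2 * ℓ - 1) (by omega)
      rwa [heven, hCLeven ℓ hℓ (by omega)] at hstep
    have hinsert : IsGreedyChoice x₀ (insertionLeaders (by omega : ℓ < n) W)
        (pprod d (2 * ℓ) r) (d (2 * ℓ + 1)) := by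
      have hstep := hd (2 * ℓ) (by omega)
      rwa [hCLodd ℓ hℓ (by omega)] at hstep
    have hX : pprod d (2 * ℓ) r = d (2 * ℓ) (pprod d (2 * ℓ - 1) r) := by
      have h := pprod_succ_apply d (2 * ℓ - 1) r
      rwa [heven] at h
    have haligned : IsPartialDecoding y r τ ℓ (ℓ + 1) (pprod d (2 * ℓ) r) :=
      hX ▸ (ih (by omega)).greedy_align (by omega) hu hx₀ horbit hry halign
    rw [show 2 * (ℓ + 1) - 1 = 2 * ℓ + 1 by omega, pprod_succ_apply]
    exact haligned.greedy_insert (by omega) humono hx₀ hfy hinsert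

end Run

end GroupCode

open GroupCode in
theorem wreath_decodes_robustly_general
    (m n : ℕ) (hn : 1 ≤ n)
    (H : Subgroup ((EuclideanSpace ℂ (Fin m)) ≃ₗᵢ[ℂ] (EuclideanSpace ℂ (Fin m))))
    (v₀ : EuclideanSpace ℂ (Fin m)) (hv₀ : ‖v₀‖ = 1)
    (hv₀sep : ∀ h : (EuclideanSpace ℂ (Fin m)) ≃ₗᵢ[ℂ] (EuclideanSpace ℂ (Fin m)),
      h ∈ H → h v₀ = v₀ → h = 1)
    (u : Fin n → ℝ) (hu : ∀ i, 0 < u i) (humono : StrictMono u)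
    (x₀ : PiLp 2 (fun _ : Fin n => EuclideanSpace ℂ (Fin m)))
    (hx₀ : ∀ i, x₀ i = (u i : ℂ) • v₀)
    (Gs : ℕ → Subgroup (Iso (PiLp 2 (fun _ : Fin n => EuclideanSpace ℂ (Fin m)))))
    (hGodd : ∀ ℓ, 1 ≤ ℓ → ℓ ≤ n →
      ∀ g : Iso (PiLp 2 (fun _ : Fin n => EuclideanSpace ℂ (Fin m))),
        g ∈ Gs (2 * ℓ - 1) ↔
          ∃ (σ : Equiv.Perm (Fin n))
            (h : Fin n → (EuclideanSpace ℂ (Fin m)) ≃ₗᵢ[ℂ] (EuclideanSpace ℂ (Fin m))),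
            (∀ i, h i ∈ H) ∧
            (∀ i : Fin n, ℓ ≤ (i : ℕ) → σ i = i) ∧
            (∀ i : Fin n, ℓ ≤ (i : ℕ) → h i = 1) ∧
            (∀ (x : PiLp 2 (fun _ : Fin n => EuclideanSpace ℂ (Fin m))) (i : Fin n),
              g x i = h (σ i) (x (σ i))))
    (CL : ℕ → Set (Iso (PiLp 2 (fun _ : Fin n => EuclideanSpace ℂ (Fin m)))))
    (hCL1 : CL 1 = {c | ∃ h ∈ H,
      ∀ (x : PiLp 2 (fun _ : Fin n => EuclideanSpace ℂ (Fin m))) (i : Fin n),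
        c x i = if (i : ℕ) = 0 then h (x i) else x i})
    (hCLeven : ∀ ℓ, 1 ≤ ℓ → ℓ ≤ n - 1 →
      CL (2 * ℓ) = {c | ∃ h ∈ H,
        ∀ (x : PiLp 2 (fun _ : Fin n => EuclideanSpace ℂ (Fin m))) (i : Fin n),
          c x i = if (i : ℕ) = ℓ then h (x i) else x i})
    (hCLodd : ∀ ℓ, 1 ≤ ℓ → ∀ hℓn : ℓ < n,
      CL (2 * ℓ + 1) = {c | ∃ j ≤ ℓ,
        ∀ (x : PiLp 2 (fun _ : Fin n => EuclideanSpace ℂ (Fin m))) (i : Fin n),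
          c x i = x (insIdx n ℓ j hℓn i)})
    (g : Iso (PiLp 2 (fun _ : Fin n => EuclideanSpace ℂ (Fin m))))
    (hg : g ∈ Gs (2 * n - 1))
    (r : PiLp 2 (fun _ : Fin n => EuclideanSpace ℂ (Fin m)))
    (hr : r ∈ DR x₀ (Gs (2 * n - 1)) g)
    (d : ℕ → Iso (PiLp 2 (fun _ : Fin n => EuclideanSpace ℂ (Fin m))))
    (hd : IsGreedyRun x₀ CL (2 * n - 1) r d) :
    pprod d (2 * n - 1) = g := by
  have hG : ∀ a, a ∈ Gs (2 * n - 1) ↔ a ∈ wreathProduct H n := fun a => by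
    have hvac : ∀ i : Fin n, ¬n ≤ (i : ℕ) := fun i => not_le.mpr i.isLt
    simp only [hGodd n hn le_rfl, wreathProduct, Set.mem_ofPred_eq, hvac, false_implies,
      implies_true, true_and]
  have hHG : wreathProduct H n ⊆ Gs (2 * n - 1) := fun a ha => (hG a).mpr ha
  have hv₀ne : v₀ ≠ 0 := norm_ne_zero_iff.mp (hv₀ ▸ one_ne_zero)
  have hstab : ∀ s ∈ Gs (2 * n - 1), s x₀ = x₀ → s = 1 := fun s hs =>
    eq_one_of_mem_wreathProduct_of_apply_eq hv₀sep hv₀ne hu humono.injective hx₀ ((hG s).mp hs)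
  have hy := apply_mem_FR_of_mem_DR hg hr
  obtain ⟨σ, h, hh, hgσ⟩ := (hG g).mp hg
  have hry : ∀ p, ∃ k ∈ H, k (r p) = g r (σ.symm p) :=
    fun p => ⟨h p, hh p, by rw [hgσ, σ.apply_symm_apply]⟩
  have hdec := isPartialDecoding_pprod hu humono hx₀
    (fun i _ => re_inner_apply_lt_of_mem_FR hHG hv₀sep hu hx₀ hy i)
    (strictMono_re_inner_of_mem_FR hHG hv₀ne humono hx₀ hy) hry σ.symm.injective
    hCL1 hCLeven hCLodd hd n hn le_rfl
  refine eq_of_apply_eq_of_mem_DR hstab hr (pprod_mem fun k hk => hHG ?_) hdec.eq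
  exact mem_wreathProduct_of_mem_leaders hCL1 hCLeven hCLodd (by omega) (by omega) (hd k hk).1

open GroupCode in
/-- **Theorem (Statement 12).** For the wreath product of a finite unitary group `H`
with `Sym(n)` acting on `(ℂ^m)^n`, with the natural subgroup sequence, coset leaders
and initial vector, the subgroup decoding algorithm decodes robustly: every greedy run
on a received vector in the decoding region of `g` outputs `g`. -/
theorem wreath_decodes_robustly
    (m n : ℕ) (hm : 1 ≤ m) (hn : 1 ≤ n)
    (H : Subgroup ((EuclideanSpace ℂ (Fin m)) ≃ₗᵢ[ℂ] (EuclideanSpace ℂ (Fin m))))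
    (hHfin : (H : Set ((EuclideanSpace ℂ (Fin m)) ≃ₗᵢ[ℂ] (EuclideanSpace ℂ (Fin m)))).Finite)
    (v₀ : EuclideanSpace ℂ (Fin m)) (hv₀ : ‖v₀‖ = 1)
    (hv₀sep : ∀ h : (EuclideanSpace ℂ (Fin m)) ≃ₗᵢ[ℂ] (EuclideanSpace ℂ (Fin m)),
      h ∈ H → h v₀ = v₀ → h = 1)
    (u : Fin n → ℝ) (hu : ∀ i, 0 < u i) (humono : StrictMono u)
    (husum : ∑ i, (u i) ^ 2 = 1)
    (x₀ : PiLp 2 (fun _ : Fin n => EuclideanSpace ℂ (Fin m)))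
    (hx₀ : ∀ i, x₀ i = (u i : ℂ) • v₀)
    (Gs : ℕ → Subgroup (Iso (PiLp 2 (fun _ : Fin n => EuclideanSpace ℂ (Fin m)))))
    (hG0 : Gs 0 = ⊥)
    (hGodd : ∀ ℓ, 1 ≤ ℓ → ℓ ≤ n →
      ∀ g : Iso (PiLp 2 (fun _ : Fin n => EuclideanSpace ℂ (Fin m))),
        g ∈ Gs (2 * ℓ - 1) ↔
          ∃ (σ : Equiv.Perm (Fin n))
            (h : Fin n → (EuclideanSpace ℂ (Fin m)) ≃ₗᵢ[ℂ] (EuclideanSpace ℂ (Fin m))),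
            (∀ i, h i ∈ H) ∧
            (∀ i : Fin n, ℓ ≤ (i : ℕ) → σ i = i) ∧
            (∀ i : Fin n, ℓ ≤ (i : ℕ) → h i = 1) ∧
            (∀ (x : PiLp 2 (fun _ : Fin n => EuclideanSpace ℂ (Fin m))) (i : Fin n),
              g x i = h (σ i) (x (σ i))))
    (hGeven : ∀ ℓ, 1 ≤ ℓ → ℓ ≤ n - 1 →
      ∀ g : Iso (PiLp 2 (fun _ : Fin n => EuclideanSpace ℂ (Fin m))),
        g ∈ Gs (2 * ℓ) ↔
          ∃ (σ : Equiv.Perm (Fin n))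
            (h : Fin n → (EuclideanSpace ℂ (Fin m)) ≃ₗᵢ[ℂ] (EuclideanSpace ℂ (Fin m))),
            (∀ i, h i ∈ H) ∧
            (∀ i : Fin n, ℓ ≤ (i : ℕ) → σ i = i) ∧
            (∀ i : Fin n, ℓ + 1 ≤ (i : ℕ) → h i = 1) ∧
            (∀ (x : PiLp 2 (fun _ : Fin n => EuclideanSpace ℂ (Fin m))) (i : Fin n),
              g x i = h (σ i) (x (σ i))))
    (CL : ℕ → Set (Iso (PiLp 2 (fun _ : Fin n => EuclideanSpace ℂ (Fin m)))))
    (hCL1 : CL 1 = {c | ∃ h ∈ H,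
      ∀ (x : PiLp 2 (fun _ : Fin n => EuclideanSpace ℂ (Fin m))) (i : Fin n),
        c x i = if (i : ℕ) = 0 then h (x i) else x i})
    (hCLeven : ∀ ℓ, 1 ≤ ℓ → ℓ ≤ n - 1 →
      CL (2 * ℓ) = {c | ∃ h ∈ H,
        ∀ (x : PiLp 2 (fun _ : Fin n => EuclideanSpace ℂ (Fin m))) (i : Fin n),
          c x i = if (i : ℕ) = ℓ then h (x i) else x i})
    (hCLodd : ∀ ℓ, 1 ≤ ℓ → ∀ hℓn : ℓ < n,
      CL (2 * ℓ + 1) = {c | ∃ j ≤ ℓ,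
        ∀ (x : PiLp 2 (fun _ : Fin n => EuclideanSpace ℂ (Fin m))) (i : Fin n),
          c x i = x (insIdx n ℓ j hℓn i)})
    (g : Iso (PiLp 2 (fun _ : Fin n => EuclideanSpace ℂ (Fin m))))
    (hg : g ∈ Gs (2 * n - 1))
    (r : PiLp 2 (fun _ : Fin n => EuclideanSpace ℂ (Fin m)))
    (hr : r ∈ DR x₀ (Gs (2 * n - 1)) g)
    (d : ℕ → Iso (PiLp 2 (fun _ : Fin n => EuclideanSpace ℂ (Fin m))))
    (hd : IsGreedyRun x₀ CL (2 * n - 1) r d) :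
    pprod d (2 * n - 1) = g :=
  wreath_decodes_robustly_general m n hn H v₀ hv₀ hv₀sep u hu humono x₀ hx₀ Gs hGodd CL hCL1 hCLeven
    hCLodd g hg r hr d hd
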